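/- Large minimum cut implies approximate recovery: There exist a constant p₀ ∈ (0, 1/2), a function f : (0, p₀) → ℝ with f(p) → 0 as p → 0, and a constant c > 0, such that for every p ∈ (0, p₀) there exists N₀ with the following property: for every graph G = (V,E) on N ≥ N₀ vertices whose global minimum cut has size at least c·log₂ N, every ground truth y : V → {−1,+1}, and every selection X ↦ Ŷ(X) of a maximizer of Σ_{uv∈E} X_uv·Y_u·Y_v over Y ∈ {−1,+1}^V, the expectation over the random edge observations X of min(Hamming error of Ŷ w.r.t. y, Hamming error of −Ŷ w.r.t. y) is at most f(p)·N. -/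

import Mathlib

/-!
If the maximizer `Ŷ` is neither `y` nor `-y`, the set `S` where `Ŷ` and `y` disagree is a proper
cut, and maximality forces at least half of the edges of `δ(S)` to be flipped; for a fixed cut this
has probability at most `(2√p) ^ |δ(S)|`. Karger's contraction argument shows that, once the
minimum cut `λ` satisfies `N ≤ 2 ^ λ`, there are at most `2 ^ (6m)` cuts of size `m`. A union bound
then gives `E[min error] ≤ N · Σ_S (2√p) ^ |δ(S)| ≤ 2 / N`, which is at most `p N` for `N ≥ 2 / p`.
-/

open Finset

def IsSign (x : ℤ) : Prop := x = 1 ∨ x = -1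

def pairProd {V : Type*} (y : V → ℤ) : Sym2 V → ℤ :=
  Sym2.lift ⟨fun u v => y u * y v, fun u v => mul_comm (y u) (y v)⟩

section

variable {V : Type*} [Fintype V] [DecidableEq V]

/-- The boundary `δ(S)`: edges of `G` with exactly one endpoint in `S`. -/
def bdry (G : SimpleGraph V) [DecidableRel G.Adj] (S : Finset V) : Finset (Sym2 V) :=
  G.edgeFinset.filter fun e => ∃ u v : V, e = s(u, v) ∧ u ∈ S ∧ v ∉ S

def hamming (Yh y : V → ℤ) : ℕ := (univ.filter fun v => Yh v ≠ y v).card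

def Maximizes (G : SimpleGraph V) [DecidableRel G.Adj] (Xe : G.edgeSet → ℤ)
    (Yh : V → ℤ) : Prop :=
  (∀ v, IsSign (Yh v)) ∧
  ∀ Y : V → ℤ, (∀ v, IsSign (Y v)) →
    (∑ e : G.edgeSet, Xe e * pairProd Y e.val) ≤ ∑ e : G.edgeSet, Xe e * pairProd Yh e.val

/-- Expectation, over the random edge observations generated from ground truth `y` with
edge noise `p`, of a function `f` of the edge observations. -/
noncomputable def expValE (G : SimpleGraph V) [DecidableRel G.Adj] (p : ℝ) (y : V → ℤ)
    (f : (G.edgeSet → ℤ) → ℝ) : ℝ :=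
  ∑ fE : G.edgeSet → Bool,
    (∏ e : G.edgeSet, if fE e then p else 1 - p) *
      f (fun e => (if fE e then -1 else 1) * pairProd y e.val)

end

section Cuts

variable {V : Type*} [Fintype V] [DecidableEq V] (G : SimpleGraph V) [DecidableRel G.Adj]

def properCuts : Finset (Finset V) := {S | S.Nonempty ∧ S ≠ univ}

lemma mem_properCuts {S : Finset V} : S ∈ properCuts ↔ S.Nonempty ∧ S ≠ univ := by
  simp [properCuts]

lemma mem_bdry_iff {S : Finset V} {u v : V} (h : G.Adj u v) :
    s(u, v) ∈ bdry G S ↔ (u ∈ S ∧ v ∉ S) ∨ (v ∈ S ∧ u ∉ S) := by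
  simp only [bdry, mem_filter, SimpleGraph.mem_edgeFinset, SimpleGraph.mem_edgeSet, h, true_and]
  constructor
  · rintro ⟨a, b, hab, ha, hb⟩
    rcases Sym2.eq_iff.1 hab with ⟨rfl, rfl⟩ | ⟨rfl, rfl⟩
    exacts [Or.inl ⟨ha, hb⟩, Or.inr ⟨ha, hb⟩]
  · rintro (⟨hu, hv⟩ | ⟨hv, hu⟩)
    exacts [⟨u, v, rfl, hu, hv⟩, ⟨v, u, Sym2.eq_swap, hv, hu⟩]

lemma card_bdry_le_card_edgeFinset (S : Finset V) : #(bdry G S) ≤ #G.edgeFinset :=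
  card_le_card (filter_subset _ _)

lemma bdry_compl (S : Finset V) : bdry G Sᶜ = bdry G S := by
  refine filter_congr fun e _ => ⟨?_, ?_⟩ <;>
    rintro ⟨u, v, rfl, hu, hv⟩ <;>
    exact ⟨v, u, Sym2.eq_swap, by simpa using hv, by simpa using hu⟩

def bdryPairs (S : Finset V) : Finset (V × V) := {q | G.Adj q.1 q.2 ∧ q.1 ∈ S ∧ q.2 ∉ S}

lemma card_bdryPairs (S : Finset V) : #(bdryPairs G S) = #(bdry G S) := by
  refine card_bij (fun q _ => s(q.1, q.2)) ?_ ?_ ?_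
  · rintro ⟨u, v⟩ hq
    simp only [bdryPairs, mem_filter, mem_univ, true_and] at hq
    exact (mem_bdry_iff G hq.1).2 (Or.inl hq.2)
  · rintro ⟨u, v⟩ hq ⟨u', v'⟩ hq' he
    simp only [bdryPairs, mem_filter, mem_univ, true_and] at hq hq'
    rcases Sym2.eq_iff.1 he with ⟨rfl, rfl⟩ | ⟨rfl, rfl⟩
    · rfl
    · exact absurd hq'.2.1 hq.2.2
  · intro e he
    simp only [bdry, mem_filter, SimpleGraph.mem_edgeFinset] at he
    obtain ⟨hadj, u, v, rfl, hu, hv⟩ := he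
    exact ⟨(u, v), by simpa [bdryPairs] using ⟨hadj, hu, hv⟩, rfl⟩

lemma card_filter_separated_le (X : Finset (V × V)) (hX : ∀ q ∈ X, G.Adj q.1 q.2)
    (S : Finset V) : #{q ∈ X | ¬(q.1 ∈ S ↔ q.2 ∈ S)} ≤ 2 * #(bdry G S) := by
  have hsub : {q ∈ X | ¬(q.1 ∈ S ↔ q.2 ∈ S)} ⊆ bdryPairs G S ∪ bdryPairs G Sᶜ := by
    rintro ⟨u, v⟩ hq
    rw [mem_filter] at hq
    have hadj := hX _ hq.1
    by_cases hu : u ∈ S <;> simp_all [bdryPairs]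
  calc #{q ∈ X | ¬(q.1 ∈ S ↔ q.2 ∈ S)} ≤ #(bdryPairs G S ∪ bdryPairs G Sᶜ) := card_le_card hsub
    _ ≤ #(bdryPairs G S) + #(bdryPairs G Sᶜ) := card_union_le _ _
    _ = 2 * #(bdry G S) := by rw [card_bdryPairs, card_bdryPairs, bdry_compl, two_mul]

end Cuts

section Contraction

variable {V : Type*} [Fintype V] [DecidableEq V] (G : SimpleGraph V) [DecidableRel G.Adj]

/-- A coloring `c : V → V` encodes a contraction of `G`, its color classes being the contracted
vertices. -/
def smallCuts (c : V → V) (B : ℕ) : Finset (Finset V) :=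
  {S | S.Nonempty ∧ S ≠ univ ∧ (∀ u v, c u = c v → (u ∈ S ↔ v ∈ S)) ∧ #(bdry G S) ≤ B}

lemma mem_smallCuts {c : V → V} {B : ℕ} {S : Finset V} :
    S ∈ smallCuts G c B ↔
      S.Nonempty ∧ S ≠ univ ∧ (∀ u v, c u = c v → (u ∈ S ↔ v ∈ S)) ∧ #(bdry G S) ≤ B := by
  simp [smallCuts]

lemma card_smallCuts_le_two_pow (c : V → V) (B : ℕ) :
    #(smallCuts G c B) ≤ 2 ^ #(univ.image c) := by
  rw [← card_powerset]
  refine card_le_card_of_injOn (·.image c) (fun S _ => by simp) ?_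
  intro S₁ h₁ S₂ h₂ himage
  replace himage : S₁.image c = S₂.image c := himage
  have hc₁ := ((mem_smallCuts G).1 h₁).2.2.1
  have hc₂ := ((mem_smallCuts G).1 h₂).2.2.1
  ext v
  constructor <;> intro hv
  · obtain ⟨u, hu, hcu⟩ := mem_image.1 (show c v ∈ S₂.image c from himage ▸ mem_image_of_mem c hv)
    exact (hc₂ u v hcu).1 hu
  · obtain ⟨u, hu, hcu⟩ := mem_image.1 (show c v ∈ S₁.image c from himage ▸ mem_image_of_mem c hv)
    exact (hc₁ u v hcu).1 hu

def merge (c : V → V) (q : V × V) : V → V := fun w => if c w = c q.2 then c q.1 else c w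

omit [Fintype V] in
lemma respects_merge {c : V → V} {q : V × V} {S : Finset V}
    (hS : ∀ u v, c u = c v → (u ∈ S ↔ v ∈ S)) (hq : q.1 ∈ S ↔ q.2 ∈ S) :
    ∀ u v, merge c q u = merge c q v → (u ∈ S ↔ v ∈ S) := by
  intro u v h
  unfold merge at h
  by_cases hu : c u = c q.2 <;> by_cases hv : c v = c q.2 <;> simp only [hu, hv, if_true,
    if_false] at h
  · exact hS u v (hu.trans hv.symm)
  · exact (hS u q.2 hu).trans (hq.symm.trans (hS q.1 v h))
  · exact ((hS u q.1 h).trans hq).trans (hS q.2 v hv.symm)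
  · exact hS u v h

lemma card_image_merge {c : V → V} {q : V × V} (hq : c q.1 ≠ c q.2) :
    #(univ.image (merge c q)) = #(univ.image c) - 1 := by
  have himage : univ.image (merge c q) = (univ.image c).erase (c q.2) := by
    ext i
    simp only [mem_image, mem_univ, true_and, mem_erase, merge]
    constructor
    · rintro ⟨w, rfl⟩
      by_cases h : c w = c q.2
      · simp only [h, if_true]; exact ⟨hq, q.1, rfl⟩
      · simp only [h, if_false]; exact ⟨h, w, rfl⟩
    · rintro ⟨hi, w, rfl⟩
      exact ⟨w, if_neg hi⟩
  rw [himage, card_erase_of_mem (mem_image_of_mem c (mem_univ _))]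

/-- The edges that survive the contraction, as ordered pairs. -/
def crossingPairs (c : V → V) : Finset (V × V) := {q | G.Adj q.1 q.2 ∧ c q.1 ≠ c q.2}

/-- Every color class is a proper cut, and its outgoing pairs are crossing pairs. -/
lemma mul_le_card_crossingPairs {lam : ℕ}
    (hmin : ∀ S : Finset V, S.Nonempty → S ≠ univ → lam ≤ #(bdry G S))
    {c : V → V} (hc : 2 ≤ #(univ.image c)) :
    #(univ.image c) * lam ≤ #(crossingPairs G c) := by
  have hclass : ∀ i ∈ univ.image c, lam ≤ #(bdryPairs G {v | c v = i}) := by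
    intro i hi
    obtain ⟨w, -, rfl⟩ := mem_image.1 hi
    rw [card_bdryPairs]
    refine hmin _ ⟨w, by simp⟩ fun huniv => ?_
    obtain ⟨j, hj, hjw⟩ := exists_mem_ne (by omega : 1 < #(univ.image c)) (c w)
    obtain ⟨w', -, rfl⟩ := mem_image.1 hj
    have hw' : w' ∈ ({v | c v = c w} : Finset V) := by rw [huniv]; exact mem_univ w'
    exact hjw (mem_filter.1 hw').2
  calc #(univ.image c) * lam = ∑ _i ∈ univ.image c, lam := by rw [sum_const, smul_eq_mul]
    _ ≤ ∑ i ∈ univ.image c, #(bdryPairs G {v | c v = i}) := sum_le_sum hclass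
    _ ≤ ∑ i ∈ univ.image c, #{q ∈ crossingPairs G c | c q.1 = i} := by
        refine sum_le_sum fun i _ => card_le_card fun q hq => ?_
        simp only [bdryPairs, crossingPairs, mem_filter, mem_univ, true_and] at hq ⊢
        exact ⟨⟨hq.1, fun h => hq.2.2 (h.symm.trans hq.2.1)⟩, hq.2.1⟩
    _ = #(crossingPairs G c) :=
        (card_eq_sum_card_fiberwise fun q _ => mem_image_of_mem c (mem_univ _)).symm

/-- Each small cut leaves all but `2B` crossing pairs uncut, so by double counting, contracting
a crossing pair preserves a large proportion of the small cuts on average. -/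
lemma card_smallCuts_mul_le_sum_merge (c : V → V) (B : ℕ) :
    #(smallCuts G c B) * (#(crossingPairs G c) - 2 * B) ≤
      ∑ q ∈ crossingPairs G c, #(smallCuts G (merge c q) B) := by
  set X := crossingPairs G c
  have hX : ∀ q ∈ X, G.Adj q.1 q.2 := fun q hq => (mem_filter.1 hq).2.1
  calc #(smallCuts G c B) * (#X - 2 * B)
      ≤ ∑ S ∈ smallCuts G c B, #{q ∈ X | q.1 ∈ S ↔ q.2 ∈ S} := by
        rw [← smul_eq_mul]
        refine card_nsmul_le_sum _ _ _ fun S hS => ?_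
        have hsep := card_filter_separated_le G X hX S
        have hcut := ((mem_smallCuts G).1 hS).2.2.2
        have hsplit := card_filter_add_card_filter_not (s := X) (fun q => q.1 ∈ S ↔ q.2 ∈ S)
        omega
    _ = ∑ q ∈ X, #{S ∈ smallCuts G c B | q.1 ∈ S ↔ q.2 ∈ S} := by
        simp only [card_filter]
        exact sum_comm
    _ ≤ ∑ q ∈ X, #(smallCuts G (merge c q) B) := by
        refine sum_le_sum fun q _ => card_le_card fun S hS => ?_
        rw [mem_filter, mem_smallCuts] at hS
        obtain ⟨⟨hne, hnu, hc, hB⟩, hq⟩ := hS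
        exact (mem_smallCuts G).2 ⟨hne, hnu, respects_merge hc hq, hB⟩

lemma le_two_pow_mul_choose_of_mul_sub_le {k m r a B lam : ℕ} (har : a < r)
    (hm : r * lam ≤ m) (hB : 2 * B ≤ a * lam) (hm0 : 0 < m)
    (h : k * (m - 2 * B) ≤ m * (2 ^ a * (r - 1).choose a)) :
    k ≤ 2 ^ a * r.choose a := by
  have h2B : 2 * B ≤ m := hB.trans ((Nat.mul_le_mul_right lam har.le).trans hm)
  have hkey : m * (r - a) ≤ r * (m - 2 * B) := by
    have := Nat.mul_le_mul_left r hB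
    have := Nat.mul_le_mul_left a hm
    zify [h2B, har.le] at *
    nlinarith
  have hchoose : (r - 1).choose a * r = r.choose a * (r - a) := by
    have := Nat.choose_mul_succ_eq (r - 1) a
    rwa [Nat.sub_add_cancel (by omega : 1 ≤ r)] at this
  refine Nat.le_of_mul_le_mul_right (c := m * (r - a)) ?_ (Nat.mul_pos hm0 (by omega))
  calc k * (m * (r - a)) ≤ k * (r * (m - 2 * B)) := Nat.mul_le_mul_left k hkey
    _ = r * (k * (m - 2 * B)) := by ring
    _ ≤ r * (m * (2 ^ a * (r - 1).choose a)) := Nat.mul_le_mul_left r h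
    _ = 2 ^ a * (m * ((r - 1).choose a * r)) := by ring
    _ = 2 ^ a * r.choose a * (m * (r - a)) := by rw [hchoose]; ring

/-- Karger's bound on the number of small cuts, in the deterministic form of his contraction
argument. -/
theorem card_smallCuts_le {lam a B : ℕ} (hlam : 0 < lam) (ha : 1 ≤ a) (hB : 2 * B ≤ a * lam)
    (hmin : ∀ S : Finset V, S.Nonempty → S ≠ univ → lam ≤ #(bdry G S)) (c : V → V) :
    #(smallCuts G c B) ≤ 2 ^ a * (max #(univ.image c) a).choose a := by
  obtain ⟨r, hr⟩ : ∃ r, #(univ.image c) = r := ⟨_, rfl⟩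
  induction r using Nat.strong_induction_on generalizing c with
  | _ r ih =>
  rw [hr]
  rcases le_or_gt r a with hra | hra
  · rw [max_eq_right hra, Nat.choose_self, mul_one]
    exact (card_smallCuts_le_two_pow G c B).trans (hr ▸ Nat.pow_le_pow_right two_pos hra)
  rw [max_eq_left hra.le]
  have hX : r * lam ≤ #(crossingPairs G c) := hr ▸ mul_le_card_crossingPairs G hmin (by omega)
  have hmerge : ∀ q ∈ crossingPairs G c,
      #(smallCuts G (merge c q) B) ≤ 2 ^ a * (r - 1).choose a := by
    intro q hq
    have hcard := card_image_merge (mem_filter.1 hq).2.2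
    have := ih (r - 1) (by omega) (merge c q) (by rw [hcard, hr])
    rwa [hcard, hr, max_eq_left (by omega)] at this
  refine le_two_pow_mul_choose_of_mul_sub_le hra hX hB (by nlinarith) ?_
  calc #(smallCuts G c B) * (#(crossingPairs G c) - 2 * B)
      ≤ ∑ q ∈ crossingPairs G c, #(smallCuts G (merge c q) B) :=
        card_smallCuts_mul_le_sum_merge G c B
    _ ≤ #(crossingPairs G c) * (2 ^ a * (r - 1).choose a) := by
        simpa using sum_le_card_nsmul _ _ _ hmerge

end Contraction

lemma choose_max_le_pow {n : ℕ} (hn : 1 ≤ n) (a : ℕ) : (max n a).choose a ≤ n ^ a := by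
  rcases le_total a n with h | h
  · rw [max_eq_left h]
    exact Nat.choose_le_pow n a
  · rw [max_eq_right h, Nat.choose_self]
    exact Nat.one_le_pow _ _ hn

section CutCounting

variable {V : Type*} [Fintype V] [DecidableEq V] (G : SimpleGraph V) [DecidableRel G.Adj]

/-- The contraction bound with `a = ⌊3m / λ⌋`, so that `2m ≤ aλ ≤ 3m`, gives at most
`(2N) ^ a ≤ 2 ^ (2aλ) ≤ 2 ^ (6m)` such cuts. -/
lemma card_filter_properCuts_le_two_pow {lam m : ℕ}
    (hmin : ∀ S : Finset V, S.Nonempty → S ≠ univ → lam ≤ #(bdry G S))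
    (hN : 2 ≤ Fintype.card V) (hNlam : Fintype.card V ≤ 2 ^ lam) (hm : lam ≤ m) :
    #{S ∈ properCuts | #(bdry G S) ≤ m} ≤ 2 ^ (6 * m) := by
  set N := Fintype.card V
  have hlam : 0 < lam := Nat.pos_of_ne_zero fun h => by rw [h, pow_zero] at hNlam; omega
  obtain ⟨a, ha⟩ : ∃ a, a = 3 * m / lam := ⟨_, rfl⟩
  have ha₁ : 2 * m ≤ a * lam := by
    have := Nat.lt_div_mul_add (a := 3 * m) hlam
    rw [← ha] at this
    omega
  have ha₂ : a * lam ≤ 3 * m := ha ▸ Nat.div_mul_le_self _ _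
  have ha₀ : 1 ≤ a := Nat.pos_of_ne_zero fun h => by rw [h, zero_mul] at ha₁; omega
  have hcuts : {S ∈ (properCuts : Finset (Finset V)) | #(bdry G S) ≤ m} ⊆ smallCuts G id m := by
    intro S hS
    rw [mem_filter, mem_properCuts] at hS
    exact (mem_smallCuts G).2 ⟨hS.1.1, hS.1.2, fun u v h => by rw [show u = v from h], hS.2⟩
  calc #{S ∈ properCuts | #(bdry G S) ≤ m} ≤ #(smallCuts G id m) := card_le_card hcuts
    _ ≤ 2 ^ a * (max N a).choose a := by
        simpa using card_smallCuts_le G hlam ha₀ ha₁ hmin id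
    _ ≤ 2 ^ a * N ^ a := Nat.mul_le_mul_left _ (choose_max_le_pow (by omega) a)
    _ = (2 * N) ^ a := (mul_pow _ _ _).symm
    _ ≤ ((2 ^ lam) ^ 2) ^ a := Nat.pow_le_pow_left (by nlinarith) a
    _ = 2 ^ (2 * (a * lam)) := by rw [← pow_mul, ← pow_mul]; ring_nf
    _ ≤ 2 ^ (6 * m) := Nat.pow_le_pow_right two_pos (by omega)

theorem sum_properCuts_pow_card_bdry_le {lam : ℕ}
    (hmin : ∀ S : Finset V, S.Nonempty → S ≠ univ → lam ≤ #(bdry G S))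
    (hN : 2 ≤ Fintype.card V) (hNlam : Fintype.card V ≤ 2 ^ lam) {q : ℝ} (hq0 : 0 ≤ q)
    (hq : 2 ^ 8 * q ≤ 1) :
    ∑ S ∈ properCuts, q ^ #(bdry G S) ≤ 2 / (Fintype.card V : ℝ) ^ 2 := by
  set N := Fintype.card V
  have hmaps : ∀ S ∈ properCuts, #(bdry G S) ∈ Ico lam (#G.edgeFinset + 1) := fun S hS => by
    rw [mem_properCuts] at hS
    exact mem_Ico.2 ⟨hmin S hS.1 hS.2, Nat.lt_succ_of_le (card_bdry_le_card_edgeFinset G S)⟩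
  have h4 : (N : ℝ) ^ 2 ≤ 4 ^ lam := by
    have : N ^ 2 ≤ 4 ^ lam := by
      calc N ^ 2 ≤ (2 ^ lam) ^ 2 := Nat.pow_le_pow_left hNlam 2
        _ = 4 ^ lam := by rw [← pow_mul, mul_comm, pow_mul]; norm_num
    exact_mod_cast this
  calc ∑ S ∈ properCuts, q ^ #(bdry G S)
      = ∑ m ∈ Ico lam (#G.edgeFinset + 1), ∑ S ∈ properCuts with #(bdry G S) = m,
          q ^ #(bdry G S) := (sum_fiberwise_of_maps_to hmaps _).symm
    _ ≤ ∑ m ∈ Ico lam (#G.edgeFinset + 1), (1 / 4 : ℝ) ^ m := by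
        refine sum_le_sum fun m hm => ?_
        have hcard : #{S ∈ properCuts | #(bdry G S) = m} ≤ 2 ^ (6 * m) :=
          (card_le_card fun S hS => by
            rw [mem_filter] at hS ⊢
            exact ⟨hS.1, hS.2.le⟩).trans
            (card_filter_properCuts_le_two_pow G hmin hN hNlam (mem_Ico.1 hm).1)
        calc ∑ S ∈ properCuts with #(bdry G S) = m, q ^ #(bdry G S)
            = #{S ∈ properCuts | #(bdry G S) = m} * q ^ m := by
              rw [sum_congr rfl fun S hS => by rw [(mem_filter.1 hS).2], sum_const, nsmul_eq_mul]
          _ ≤ (2 ^ (6 * m) : ℕ) * q ^ m := by gcongr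
          _ = (2 ^ 6 * q) ^ m := by push_cast; rw [mul_pow, pow_mul]
          _ ≤ (1 / 4) ^ m := by gcongr; linarith
    _ ≤ (1 / 4) ^ lam / (1 - 1 / 4) := geom_sum_Ico_le_of_lt_one (by norm_num) (by norm_num)
    _ = 4 / 3 / 4 ^ lam := by rw [one_div_pow]; field_simp; norm_num
    _ ≤ 2 / (N : ℝ) ^ 2 := by
        rw [div_le_div_iff₀ (by positivity) (by positivity)]
        nlinarith

end CutCounting

section Flips

variable {ι : Type*} [Fintype ι] [DecidableEq ι] {p : ℝ}

def flipWeight (p : ℝ) (b : ι → Bool) : ℝ := ∏ i, if b i then p else 1 - p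

omit [DecidableEq ι] in
lemma flipWeight_nonneg (hp0 : 0 ≤ p) (hp1 : p ≤ 1) (b : ι → Bool) : 0 ≤ flipWeight p b :=
  prod_nonneg fun i _ => by split <;> linarith

lemma sum_flipWeight_mul_all_flipped (T : Finset ι) :
    ∑ b : ι → Bool, flipWeight p b * (if ∀ i ∈ T, b i then 1 else 0) = p ^ #T := by
  have hfactor : ∀ b : ι → Bool, flipWeight p b * (if ∀ i ∈ T, b i then 1 else 0) =
      ∏ i, (if b i then p else 1 - p) * (if i ∈ T then (if b i then 1 else 0) else 1) := by
    intro b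
    rw [prod_mul_distrib, prod_ite_mem, univ_inter, prod_boole]
    congr
  calc ∑ b : ι → Bool, flipWeight p b * (if ∀ i ∈ T, b i then 1 else 0)
      = ∏ i, ∑ x : Bool,
          (if x then p else 1 - p) * (if i ∈ T then (if x then 1 else 0) else 1) := by
        simp_rw [hfactor, Fintype.prod_sum]
    _ = ∏ i, if i ∈ T then p else 1 := prod_congr rfl fun i _ => by split_ifs <;> simp
    _ = p ^ #T := by rw [prod_ite_mem, univ_inter, prod_const]

lemma sum_flipWeight_mul_half_flipped_le (hp0 : 0 ≤ p) (hp1 : p ≤ 1) (D : Finset ι) :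
    ∑ b : ι → Bool, flipWeight p b * (if #D ≤ 2 * #{i ∈ D | b i} then 1 else 0) ≤
      (2 * √p) ^ #D := by
  set k := (#D + 1) / 2
  have hcover : ∀ b : ι → Bool, (if #D ≤ 2 * #{i ∈ D | b i} then (1 : ℝ) else 0) ≤
      ∑ T ∈ powersetCard k D, if ∀ i ∈ T, b i then 1 else 0 := by
    intro b
    split_ifs with h
    · obtain ⟨T, hT, hTk⟩ := exists_subset_card_eq (show k ≤ #{i ∈ D | b i} by omega)
      have hmem : T ∈ powersetCard k D := mem_powersetCard.2 ⟨hT.trans (filter_subset _ _), hTk⟩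
      have := single_le_sum (f := fun T => if ∀ i ∈ T, b i then (1 : ℝ) else 0)
        (fun _ _ => by positivity) hmem
      rwa [if_pos fun i hi => (mem_filter.1 (hT hi)).2] at this
    · exact sum_nonneg fun _ _ => by positivity
  calc ∑ b : ι → Bool, flipWeight p b * (if #D ≤ 2 * #{i ∈ D | b i} then 1 else 0)
      ≤ ∑ b : ι → Bool, flipWeight p b *
          ∑ T ∈ powersetCard k D, if ∀ i ∈ T, b i then 1 else 0 :=
        sum_le_sum fun b _ => mul_le_mul_of_nonneg_left (hcover b) (flipWeight_nonneg hp0 hp1 b)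
    _ = ∑ T ∈ powersetCard k D, p ^ #T := by
        simp_rw [mul_sum]
        rw [sum_comm]
        exact sum_congr rfl fun T _ => sum_flipWeight_mul_all_flipped T
    _ = (#D).choose k * p ^ k := by
        rw [sum_congr rfl fun T hT => by rw [(mem_powersetCard.1 hT).2], sum_const,
          card_powersetCard, nsmul_eq_mul]
    _ ≤ 2 ^ #D * √p ^ #D := by
        gcongr
        · exact_mod_cast Nat.choose_le_two_pow _ _
        · calc p ^ k = √p ^ (2 * k) := by rw [pow_mul, Real.sq_sqrt hp0]
            _ ≤ √p ^ #D := pow_le_pow_of_le_one (Real.sqrt_nonneg p)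
                (Real.sqrt_le_one.2 hp1) (by omega)
    _ = (2 * √p) ^ #D := (mul_pow _ _ _).symm

end Flips

section Recovery

variable {V : Type*} [Fintype V] [DecidableEq V] (G : SimpleGraph V) [DecidableRel G.Adj]

omit [Fintype V] [DecidableEq V] in
lemma pairProd_mk (y : V → ℤ) (u v : V) : pairProd y s(u, v) = y u * y v := rfl

omit [Fintype V] [DecidableEq V] in
lemma pairProd_mul (y z : V → ℤ) (e : Sym2 V) :
    pairProd y e * pairProd z e = pairProd (y * z) e := by
  induction e using Sym2.ind with
  | _ u v => simp only [pairProd_mk, Pi.mul_apply]; ring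

omit [Fintype V] [DecidableEq V] in
lemma pairProd_mul_self {y : V → ℤ} (hy : ∀ v, IsSign (y v)) (e : Sym2 V) :
    pairProd y e * pairProd y e = 1 := by
  induction e using Sym2.ind with
  | _ u v => rcases hy u with hu | hu <;> rcases hy v with hv | hv <;> simp [pairProd_mk, hu, hv]

lemma pairProd_mul_eq_ite {y Y : V → ℤ} (hy : ∀ v, IsSign (y v)) (hY : ∀ v, IsSign (Y v))
    {e : Sym2 V} (he : e ∈ G.edgeSet) :
    pairProd (y * Y) e = if e ∈ bdry G {v | Y v ≠ y v} then -1 else 1 := by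
  induction e using Sym2.ind with
  | _ u v =>
  have hsign : ∀ w, y w * Y w = if Y w = y w then 1 else -1 := fun w => by
    rcases hy w with h | h <;> rcases hY w with h' | h' <;> simp [h, h']
  rw [pairProd_mk, Pi.mul_apply, Pi.mul_apply, hsign u, hsign v]
  by_cases hu : Y u = y u <;> by_cases hv : Y v = y v <;> simp [mem_bdry_iff G he, hu, hv]

def flipObs (y : V → ℤ) (b : G.edgeSet → Bool) : G.edgeSet → ℤ :=
  fun e => (if b e then -1 else 1) * pairProd y e.val

def bdryEdges (S : Finset V) : Finset G.edgeSet := (bdry G S).subtype (· ∈ G.edgeSet)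

lemma card_bdryEdges (S : Finset V) : #(bdryEdges G S) = #(bdry G S) := by
  rw [bdryEdges, card_subtype, filter_true_of_mem (s := bdry G S) fun e he =>
    SimpleGraph.mem_edgeFinset.1 (filter_subset _ _ he)]

omit [Fintype V] [DecidableEq V] in
lemma card_le_two_mul_card_filter_of_sum_nonpos {ι : Type*} (D : Finset ι) (b : ι → Bool)
    (h : ∑ i ∈ D, (if b i then (-1 : ℤ) else 1) ≤ 0) : #D ≤ 2 * #{i ∈ D | b i} := by
  simp only [sum_ite, sum_const, nsmul_eq_mul, mul_neg, mul_one] at h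
  have := card_filter_add_card_filter_not (s := D) (fun i => b i)
  omega

/-- Flipping the labels on `S = {v | Y v ≠ y v}` changes the objective by `-2` times the signed
count of flips on `δ(S)`, so a maximizer sees at least as many flipped as unflipped edges there. -/
lemma sum_bdryEdges_flipSign_nonpos {y Y : V → ℤ} (hy : ∀ v, IsSign (y v))
    {b : G.edgeSet → Bool} (hmax : Maximizes G (flipObs G y b) Y) :
    ∑ e ∈ bdryEdges G {v | Y v ≠ y v}, (if b e then (-1 : ℤ) else 1) ≤ 0 := by
  set D := bdryEdges G {v | Y v ≠ y v}
  set σ : G.edgeSet → ℤ := fun e => if b e then -1 else 1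
  have hobj_y : ∑ e : G.edgeSet, flipObs G y b e * pairProd y e.val = ∑ e, σ e :=
    sum_congr rfl fun e _ => by rw [flipObs, mul_assoc, pairProd_mul_self hy, mul_one]
  have hobj_Y : ∑ e : G.edgeSet, flipObs G y b e * pairProd Y e.val =
      ∑ e, σ e - 2 * ∑ e ∈ D, σ e := by
    calc ∑ e : G.edgeSet, flipObs G y b e * pairProd Y e.val
        = ∑ e : G.edgeSet, (σ e - 2 * if e ∈ D then σ e else 0) := sum_congr rfl fun e _ => by
          rw [flipObs, mul_assoc, pairProd_mul, pairProd_mul_eq_ite G hy hmax.1 e.2]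
          have hD : e ∈ D ↔ e.val ∈ bdry G {v | Y v ≠ y v} := mem_subtype
          by_cases he : e.val ∈ bdry G {v | Y v ≠ y v} <;>
            simp only [hD, he, if_true, if_false, σ] <;> split_ifs <;> norm_num
      _ = ∑ e, σ e - 2 * ∑ e ∈ D, σ e := by
          rw [sum_sub_distrib, ← mul_sum, sum_ite_mem, univ_inter]
  linarith [hmax.2 y hy]

lemma exists_properCut_half_flipped {y Y : V → ℤ} (hy : ∀ v, IsSign (y v))
    {b : G.edgeSet → Bool} (hmax : Maximizes G (flipObs G y b) Y)
    (h₁ : hamming Y y ≠ 0) (h₂ : hamming (fun v => -(Y v)) y ≠ 0) :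
    ∃ S ∈ properCuts, #(bdryEdges G S) ≤ 2 * #{e ∈ bdryEdges G S | b e} := by
  refine ⟨({v | Y v ≠ y v} : Finset V), mem_properCuts.2 ⟨card_ne_zero.1 h₁, fun hS => h₂ ?_⟩,
    card_le_two_mul_card_filter_of_sum_nonpos _ _ (sum_bdryEdges_flipSign_nonpos G hy hmax)⟩
  rw [hamming, card_eq_zero, filter_eq_empty_iff]
  intro v _
  have hv : v ∈ ({v | Y v ≠ y v} : Finset V) := by rw [hS]; exact mem_univ v
  rw [mem_filter] at hv
  have := hy v
  have := hmax.1 v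
  unfold IsSign at *
  omega

lemma min_hamming_le {y Y : V → ℤ} (hy : ∀ v, IsSign (y v)) {b : G.edgeSet → Bool}
    (hmax : Maximizes G (flipObs G y b) Y) :
    (min (hamming Y y) (hamming (fun v => -(Y v)) y) : ℝ) ≤
      Fintype.card V * ∑ S ∈ properCuts,
        if #(bdryEdges G S) ≤ 2 * #{e ∈ bdryEdges G S | b e} then 1 else 0 := by
  have hrhs : 0 ≤ (Fintype.card V : ℝ) * ∑ S ∈ properCuts,
      if #(bdryEdges G S) ≤ 2 * #{e ∈ bdryEdges G S | b e} then (1 : ℝ) else 0 := by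
    positivity
  by_cases h₁ : hamming Y y = 0
  · exact (min_le_left _ _).trans (by rwa [h₁, Nat.cast_zero])
  by_cases h₂ : hamming (fun v => -(Y v)) y = 0
  · exact (min_le_right _ _).trans (by rwa [h₂, Nat.cast_zero])
  obtain ⟨S, hS, hhalf⟩ := exists_properCut_half_flipped G hy hmax h₁ h₂
  have hone : (1 : ℝ) ≤ ∑ S ∈ properCuts,
      if #(bdryEdges G S) ≤ 2 * #{e ∈ bdryEdges G S | b e} then 1 else 0 := by
    have := single_le_sum (fun S _ => by positivity) hS (f := fun S =>
      if #(bdryEdges G S) ≤ 2 * #{e ∈ bdryEdges G S | b e} then (1 : ℝ) else 0)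
    rwa [if_pos hhalf] at this
  have hham : (hamming Y y : ℝ) ≤ Fintype.card V := by
    exact_mod_cast (card_filter_le _ _).trans_eq card_univ
  calc (min (hamming Y y) (hamming (fun v => -(Y v)) y) : ℝ) ≤ hamming Y y := min_le_left _ _
    _ ≤ Fintype.card V * 1 := by rw [mul_one]; exact hham
    _ ≤ _ := by gcongr

theorem expValE_min_hamming_le {p : ℝ} (hp0 : 0 ≤ p) (hp1 : p ≤ 1) {y : V → ℤ}
    (hy : ∀ v, IsSign (y v)) {Yhat : (G.edgeSet → ℤ) → (V → ℤ)}
    (hYhat : ∀ Xe, Maximizes G Xe (Yhat Xe)) :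
    expValE G p y (fun Xe =>
        (min (hamming (Yhat Xe) y) (hamming (fun v => -(Yhat Xe v)) y) : ℝ)) ≤
      Fintype.card V * ∑ S ∈ properCuts, (2 * √p) ^ #(bdry G S) := by
  calc expValE G p y (fun Xe =>
        (min (hamming (Yhat Xe) y) (hamming (fun v => -(Yhat Xe v)) y) : ℝ))
      ≤ ∑ b, flipWeight p b * (Fintype.card V * ∑ S ∈ properCuts,
          if #(bdryEdges G S) ≤ 2 * #{e ∈ bdryEdges G S | b e} then 1 else 0) :=
        sum_le_sum fun b _ => mul_le_mul_of_nonneg_left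
          (min_hamming_le G hy (hYhat (flipObs G y b))) (flipWeight_nonneg hp0 hp1 b)
    _ = Fintype.card V * ∑ S ∈ properCuts, ∑ b, flipWeight p b *
          (if #(bdryEdges G S) ≤ 2 * #{e ∈ bdryEdges G S | b e} then 1 else 0) := by
        simp only [mul_sum]
        rw [sum_comm]
        exact sum_congr rfl fun _ _ => sum_congr rfl fun _ _ => by ring
    _ ≤ Fintype.card V * ∑ S ∈ properCuts, (2 * √p) ^ #(bdry G S) := by
        gcongr with S
        rw [← card_bdryEdges G S]
        exact sum_flipWeight_mul_half_flipped_le hp0 hp1 _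

end Recovery

/-- large minimum cut implies approximate recovery: there are
`p₀ ∈ (0, 1/2)`, `f` with `f(p) → 0` as `p → 0⁺`, and `c > 0` such that for every
`p ∈ (0, p₀)` there is `N₀` such that every graph on `N ≥ N₀` vertices whose global
minimum cut is at least `c log₂ N` satisfies: for every ground truth and every selection
of maximizers `Ŷ(X)`, the expected value of `min(ham(Ŷ, y), ham(−Ŷ, y))` is at most
`f(p) N`. -/
theorem min_cut_approximate_recovery :
    ∃ p₀ : ℝ, 0 < p₀ ∧ p₀ < 1/2 ∧
    ∃ f : ℝ → ℝ, Filter.Tendsto f (nhdsWithin 0 (Set.Ioi 0)) (nhds 0) ∧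
    ∃ c : ℝ, 0 < c ∧
      ∀ p : ℝ, 0 < p → p < p₀ →
      ∃ N₀ : ℕ, ∀ (V : Type) [Fintype V] [DecidableEq V]
        (G : SimpleGraph V) [DecidableRel G.Adj],
        N₀ ≤ Fintype.card V →
        (∀ S : Finset V, S.Nonempty → S ≠ univ →
          c * Real.logb 2 (Fintype.card V) ≤ ((bdry G S).card : ℝ)) →
        ∀ y : V → ℤ, (∀ v, IsSign (y v)) →
        ∀ Yhat : (G.edgeSet → ℤ) → (V → ℤ), (∀ Xe, Maximizes G Xe (Yhat Xe)) →
        expValE G p y (fun Xe =>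
            (min (hamming (Yhat Xe) y) (hamming (fun v => -(Yhat Xe v)) y) : ℝ)) ≤
          f p * (Fintype.card V : ℝ) := by
  refine ⟨1 / 2 ^ 18, by norm_num, by norm_num, id,
    Filter.tendsto_id.mono_left nhdsWithin_le_nhds, 1, one_pos,
    fun p hp0 hp => ⟨max 2 ⌈2 / p⌉₊, fun V _ _ G _ hN hcut y hy Yhat hYhat => ?_⟩⟩
  set N := Fintype.card V
  have hN2 : 2 ≤ N := le_of_max_le_left hN
  have hNp : 2 / p ≤ N := (Nat.le_ceil _).trans (by exact_mod_cast le_of_max_le_right hN)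
  have hmin : ∀ S : Finset V, S.Nonempty → S ≠ univ → Nat.clog 2 N ≤ #(bdry G S) :=
    fun S h₁ h₂ => by
      rw [← Real.natCeil_logb_natCast, Nat.ceil_le]
      simpa using hcut S h₁ h₂
  have hq : 2 ^ 8 * (2 * √p) ≤ 1 := by
    have : √p ≤ 1 / 2 ^ 9 := Real.sqrt_le_iff.2 ⟨by norm_num, by linarith⟩
    linarith
  calc expValE G p y _ ≤ N * ∑ S ∈ properCuts, (2 * √p) ^ #(bdry G S) :=
        expValE_min_hamming_le G hp0.le (by linarith) hy hYhat
    _ ≤ N * (2 / (N : ℝ) ^ 2) := by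
        gcongr
        exact sum_properCuts_pow_card_bdry_le G hmin hN2 (Nat.le_pow_clog one_lt_two N)
          (by positivity) hq
    _ = 2 / N := by field_simp
    _ ≤ id p * N := by
        have hpN : 2 ≤ p * N := by rwa [div_le_iff₀ hp0, mul_comm] at hNp
        have hN1 : (1 : ℝ) ≤ N := by exact_mod_cast (by omega : 1 ≤ N)
        rw [id, div_le_iff₀ (by positivity)]
        nlinarith
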